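/- arXiv:1904.02079 — 6 statements merged into one kernel-verified Lean document; each statement's English description precedes it below -/
import Mathlib

section
/- Let A and B be finite types of Boolean variables, let α be a formula over A, let β be a formula over B, and let w be a weight function over A ⊕ B. Define the formula α ∧ β over A ⊕ B by (α ∧ β)(ρ, τ) ⟺ α(ρ) ∧ β(τ). Then WMC(α ∧ β, w) = WMC(α, w_A) · WMC(β, w_B), where w_A and w_B are the restrictions of w to A and B. (Independent Conjunction: the weighted model count of a conjunction of formulas over disjoint variable sets is the product of their weighted model counts.) -/
open Classical in
/-- The weighted model count of a formula `φ` over a finite type `V` of Boolean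
variables, with weight function `w`. -/
noncomputable def WMC {V : Type} [Fintype V] (φ : (V → Bool) → Prop) (w : V → Bool → ℝ) : ℝ :=
  ∑ ω : V → Bool, if φ ω then ∏ v, w v (ω v) else 0

/-- **Independent Conjunction**: the weighted model count of a conjunction of
formulas over disjoint variable sets `A` and `B` is the product of their
weighted model counts. -/
theorem wmc_independent_conjunction {A B : Type} [Fintype A] [Fintype B]
    (α : (A → Bool) → Prop) (β : (B → Bool) → Prop)
    (w : A ⊕ B → Bool → ℝ) (hw : ∀ v b, 0 ≤ w v b) :
    WMC (fun ω => α (fun a => ω (Sum.inl a)) ∧ β (fun b => ω (Sum.inr b))) w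
      = WMC α (fun a => w (Sum.inl a)) * WMC β (fun b => w (Sum.inr b)) := by
  classical
  rw [WMC, WMC, WMC, Finset.sum_mul_sum]
  refine Eq.trans ?_ (Fintype.sum_prod_type
    (f := fun p : (A → Bool) × (B → Bool) =>
      (if α p.1 then ∏ v, w (Sum.inl v) (p.1 v) else 0) *
        (if β p.2 then ∏ v, w (Sum.inr v) (p.2 v) else 0)))
  have := Fintype.sum_equiv (Equiv.sumArrowEquivProdArrow A B Bool)
    (fun ω : A ⊕ B → Bool =>
      if (α fun a => ω (Sum.inl a)) ∧ β fun b => ω (Sum.inr b) then ∏ v : A ⊕ B, w v (ω v) else 0)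
    (fun p : (A → Bool) × (B → Bool) =>
      (if α p.1 then ∏ v, w (Sum.inl v) (p.1 v) else 0) *
        (if β p.2 then ∏ v, w (Sum.inr v) (p.2 v) else 0)) ?_
  · convert this using 2 <;>
      first
        | (congr 1; exact Subsingleton.elim _ _)
        | (congr 1; exact Subsingleton.elim _ _)
        | congr
  intro ω
  simp only [Equiv.sumArrowEquivProdArrow, Equiv.coe_fn_mk, ite_mul, mul_ite, zero_mul,
    mul_zero, Fintype.prod_sum_type]
  by_cases hα : α (fun a => ω (Sum.inl a)) <;> by_cases hβ : β (fun b => ω (Sum.inr b)) <;>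
    simp [hα, hβ, Function.comp_def]
end

section
/- Let X and Y be finite types of Boolean variables, let α be a formula over X ⊕ Y, and let w be a weight function over X ⊕ Y. Suppose (i) X is functionally dependent on Y for α, i.e. for every assignment y : Y → Bool there is at most one assignment ξ : X → Bool such that (ξ, y) is a model of α, and (ii) w v b = 1 for every v ∈ X and b : Bool. Then WMC(α, w) = WMC(∃X. α, w_Y), where the formula (∃X. α) over Y is defined by (∃X. α)(y) ⟺ ∃ ξ : X → Bool, α(ξ, y), and w_Y is the restriction of w to Y. (Functionally Dependent Existential Quantification.) -/
open Classical in
/-- **Functionally Dependent Existential Quantification**: if `X` is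
functionally dependent on `Y` for `α` and all literals over `X` have weight 1,
then the weighted model count of `α` equals that of `∃X. α`. -/
theorem wmc_functional_existential {X Y : Type} [Fintype X] [Fintype Y]
    (α : (X ⊕ Y → Bool) → Prop)
    (w : X ⊕ Y → Bool → ℝ) (hw : ∀ v b, 0 ≤ w v b)
    (hdep : ∀ y : Y → Bool, ∀ ξ₁ ξ₂ : X → Bool,
      α (Sum.elim ξ₁ y) → α (Sum.elim ξ₂ y) → ξ₁ = ξ₂)
    (hunit : ∀ (v : X) (b : Bool), w (Sum.inl v) b = 1) :
    WMC α w
      = WMC (fun y => ∃ ξ : X → Bool, α (Sum.elim ξ y)) (fun v => w (Sum.inr v)) := by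
  have key : (∑ ω : X ⊕ Y → Bool, if α ω then ∏ v, w v (ω v) else 0)
      = ∑ y : Y → Bool, if (∃ ξ : X → Bool, α (Sum.elim ξ y))
          then ∏ v : Y, w (Sum.inr v) (y v) else 0 := by
    have h1 : (∑ ω : X ⊕ Y → Bool, if α ω then ∏ v, w v (ω v) else 0)
        = ∑ p : (X → Bool) × (Y → Bool),
            if α (Sum.elim p.1 p.2) then ∏ v, w v (Sum.elim p.1 p.2 v) else 0 := by
      refine (Fintype.sum_equiv (Equiv.sumArrowEquivProdArrow X Y Bool).symm
        _ _ fun p => ?_).symm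
      have : ∀ v, (Equiv.sumArrowEquivProdArrow X Y Bool).symm p v
          = Sum.elim p.1 p.2 v := by intro v; cases v <;> rfl
      rw [funext this]
    rw [h1, Fintype.sum_prod_type_right]
    refine Finset.sum_congr rfl fun y _ => ?_
    have hprod : ∀ ξ : X → Bool,
        (∏ v, w v (Sum.elim ξ y v)) = ∏ v, w (Sum.inr v) (y v) := by
      intro ξ
      rw [Fintype.prod_sum_type]
      simp [hunit]
    by_cases h : ∃ ξ : X → Bool, α (Sum.elim ξ y)
    · obtain ⟨ξ₀, hξ₀⟩ := h
      rw [Finset.sum_eq_single ξ₀]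
      · rw [if_pos hξ₀, hprod ξ₀, if_pos ⟨ξ₀, hξ₀⟩]
      · intro ξ _ hne
        rw [if_neg]
        intro hα
        exact hne (hdep y ξ ξ₀ hα hξ₀)
      · intro h'; exact absurd (Finset.mem_univ ξ₀) h'
    · rw [if_neg h]
      apply Finset.sum_eq_zero
      intro ξ _
      rw [if_neg fun hα => h ⟨ξ, hα⟩]
  unfold WMC
  convert key using 2 <;> congr 1 <;> exact Subsingleton.elim _ _
end

section
/- Let Y be a finite type of Boolean variables and let α be a formula over assignments (b, y) where b : Bool is the value of one distinguished variable x and y : Y → Bool. Suppose x is functionally dependent on Y for α, i.e. for every y : Y → Bool at most one of α(true, y) and α(false, y) holds. Then for any weight function w over Y, WMC(∃x. α, w) = WMC(α | x, w) + WMC(α | ¬x, w), where (α | x)(y) ⟺ α(true, y), (α | ¬x)(y) ⟺ α(false, y), and (∃x. α)(y) ⟺ α(true, y) ∨ α(false, y). (Single-variable case of existential quantification: under functional dependence, the two conditionings are mutually exclusive and their counts add.) -/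
/-- Single-variable case of existential quantification: if the distinguished
variable `x` is functionally dependent on `Y` for `α`, the two conditionings
are mutually exclusive and their weighted model counts add. -/
theorem wmc_exists_single_var {Y : Type} [Fintype Y]
    (α : Bool → (Y → Bool) → Prop)
    (hdep : ∀ y : Y → Bool, ¬(α true y ∧ α false y))
    (w : Y → Bool → ℝ) (hw : ∀ v b, 0 ≤ w v b) :
    WMC (fun y => α true y ∨ α false y) w
      = WMC (fun y => α true y) w + WMC (fun y => α false y) w := by
  classical
  unfold WMC
  rw [← Finset.sum_add_distrib]
  apply Finset.sum_congr rfl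
  intro ω _
  by_cases h1 : α true ω <;> by_cases h2 : α false ω <;>
    simp [h1, h2] <;> exact absurd ⟨h1, h2⟩ (hdep ω)
end

section
/- Let U be a finite type of Boolean variables, x ∈ U, and let e : (U → Bool) → Bool be an expression on input states. Consider formulas over U ⊕ U (unprimed input copy and primed output copy). Let φ be the formula with (σ, σ') a model iff σ' x = e σ and σ' y = σ y for all y ≠ x, and let w assign weight 1 to every literal. Then for all states σ, σ' : U → Bool: WMC(φ ∧ [σ], w) = 1, and WMC(φ ∧ [σ] ∧ [σ'], w) = 1 if σ' = σ[x ↦ e σ] and = 0 otherwise. (Correctness of the compilation of the assignment statement x := e.) -/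
/-! Conjoined with `[σ]`, the assignment formula has the single model `(σ, σ[x ↦ e σ])`:
the primed half is forced to be `σ[x ↦ e σ]` by `Function.eq_update_iff`. A formula with a
single model counts the weight of that model, and adding `[σ']` keeps it or kills it. -/

theorem WMC_eq_ite_of_iff_eq_and {V : Type} [Fintype V] {φ : (V → Bool) → Prop}
    {w : V → Bool → ℝ} (ω₀ : V → Bool) (p : Prop) [Decidable p]
    (h : ∀ ω, φ ω ↔ ω = ω₀ ∧ p) :
    WMC φ w = if p then ∏ v, w v (ω₀ v) else 0 := by
  unfold WMC
  rw [Finset.sum_eq_single ω₀ (fun ω _ hω => by simp [h, hω]) (by simp)]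
  simp [h]

theorem Sum.eq_elim_iff {α β γ : Type*} {f : α ⊕ β → γ} {u : α → γ} {v : β → γ} :
    f = Sum.elim u v ↔ f ∘ Sum.inl = u ∧ f ∘ Sum.inr = v := by
  rw [← Sum.elim_comp_inl_inr f, Sum.elim_eq_iff]
  rfl

open Classical in
/-- Correctness of the compilation of the assignment statement `x := e`. -/
theorem wmc_assign_correct {U : Type} [Fintype U] [DecidableEq U]
    (x : U) (e : (U → Bool) → Bool) (σ σ' : U → Bool) :
    -- the compiled formula: σ' x = e σ and σ' agrees with σ off x
    let φ : (U ⊕ U → Bool) → Prop := fun ω =>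
      ω (Sum.inr x) = e (fun u => ω (Sum.inl u))
        ∧ ∀ y : U, y ≠ x → ω (Sum.inr y) = ω (Sum.inl y)
    WMC (fun ω => φ ω ∧ (fun u => ω (Sum.inl u)) = σ) (fun _ _ => (1 : ℝ)) = 1
    ∧ WMC (fun ω => φ ω ∧ (fun u => ω (Sum.inl u)) = σ
            ∧ (fun u => ω (Sum.inr u)) = σ') (fun _ _ => (1 : ℝ))
        = if σ' = Function.update σ x (e σ) then 1 else 0 := by
  intro φ
  set ω₀ : U ⊕ U → Bool := Sum.elim σ (Function.update σ x (e σ))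
  have models : ∀ ω, (φ ω ∧ (fun u => ω (Sum.inl u)) = σ) ↔ ω = ω₀ := fun ω => by
    rw [Sum.eq_elim_iff, Function.eq_update_iff]
    constructor
    · rintro ⟨hφ, rfl⟩
      exact ⟨rfl, hφ⟩
    · rintro ⟨rfl, hφ⟩
      exact ⟨hφ, rfl⟩
  constructor
  · rw [WMC_eq_ite_of_iff_eq_and ω₀ True (by simpa using models)]
    simp
  · rw [WMC_eq_ite_of_iff_eq_and ω₀ (σ' = Function.update σ x (e σ))]
    · simp
    · intro ω
      rw [← and_assoc, models, and_congr_right_iff]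
      rintro rfl
      exact eq_comm
end

section
/- Let U be a finite type of Boolean variables and let e : (U → Bool) → Bool be an expression on input states. Consider formulas over U ⊕ U (unprimed input copy and primed output copy). Let φ be the formula with (σ, σ') a model iff e σ = true and σ' = σ, and let w assign weight 1 to every literal. Then for all states σ, σ' : U → Bool: WMC(φ ∧ [σ], w) = 1 if e σ = true and = 0 otherwise; and WMC(φ ∧ [σ] ∧ [σ'], w) = 1 if σ' = σ and e σ = true, and = 0 otherwise. (Correctness of the compilation of the observe(e) statement.) -/
open Classical in
lemma sum_ite_eq_point {α : Type} [Fintype α] (a : α) (c : Prop) :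
    ∑ x : α, (if x = a ∧ c then (1:ℝ) else 0) = if c then 1 else 0 := by
  by_cases hc : c <;> simp [hc]

open Classical in
/-- Correctness of the compilation of the `observe(e)` statement. -/
theorem wmc_observe_correct {U : Type} [Fintype U]
    (e : (U → Bool) → Bool) (σ σ' : U → Bool) :
    -- the compiled formula: e σ holds and σ' = σ
    let φ : (U ⊕ U → Bool) → Prop := fun ω =>
      e (fun u => ω (Sum.inl u)) = true
        ∧ (fun u => ω (Sum.inr u)) = (fun u => ω (Sum.inl u))
    WMC (fun ω => φ ω ∧ (fun u => ω (Sum.inl u)) = σ) (fun _ _ => (1 : ℝ))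
        = (if e σ = true then 1 else 0)
    ∧ WMC (fun ω => φ ω ∧ (fun u => ω (Sum.inl u)) = σ
            ∧ (fun u => ω (Sum.inr u)) = σ') (fun _ _ => (1 : ℝ))
        = (if σ' = σ ∧ e σ = true then 1 else 0) := by
  intro φ
  have h1 : ∀ ω : U ⊕ U → Bool,
      (φ ω ∧ (fun u => ω (Sum.inl u)) = σ) ↔ (ω = Sum.elim σ σ ∧ e σ = true) := by
    intro ω
    constructor
    · rintro ⟨⟨he, h2⟩, h3⟩
      refine ⟨funext fun x => ?_, by rwa [h3] at he⟩
      cases x with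
      | inl u => exact congrFun h3 u
      | inr u => exact (congrFun h2 u).trans (congrFun h3 u)
    · rintro ⟨rfl, he⟩
      exact ⟨⟨by simpa using he, rfl⟩, rfl⟩
  have h2 : ∀ ω : U ⊕ U → Bool,
      (φ ω ∧ (fun u => ω (Sum.inl u)) = σ ∧ (fun u => ω (Sum.inr u)) = σ')
        ↔ (ω = Sum.elim σ σ ∧ (σ' = σ ∧ e σ = true)) := by
    intro ω
    constructor
    · rintro ⟨⟨he, hp⟩, h3, h4⟩
      refine ⟨funext fun x => ?_, ?_, by rwa [h3] at he⟩
      · cases x with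
        | inl u => exact congrFun h3 u
        | inr u => exact (congrFun hp u).trans (congrFun h3 u)
      · rw [← h4, hp, h3]
    · rintro ⟨rfl, h5, he⟩
      exact ⟨⟨by simpa using he, rfl⟩, rfl, by simp [h5]⟩
  constructor
  · unfold WMC
    simp only [Finset.prod_const_one, h1]
    by_cases hc : e σ = true <;> simp [hc]
  · unfold WMC
    simp only [Finset.prod_const_one, h2]
    by_cases hc : σ' = σ ∧ e σ = true <;> simp [hc]
end

section
/- Let U be a finite type of Boolean variables and consider the triple space U ⊕ U ⊕ U of unprimed, primed, and double-primed copies. Let φ₁ be a formula over the first two copies (a predicate on pairs (σ, τ)), let φ₂ be a formula over the last two copies (a predicate on pairs (τ, σ'')), and let w be a weight function over U ⊕ U ⊕ U such that every literal over the middle (primed) copy has weight 1. Let w₁₂ and w₂₃ denote the restrictions of w to the first two and last two copies respectively. Then for all states σ, σ'' : U → Bool: Σ_{τ : U → Bool} WMC(φ₁ ∧ [σ] ∧ [τ], w₁₂) · WMC(φ₂ ∧ [τ] ∧ [σ''], w₂₃) = WMC(φ₁ ⋈ φ₂ ∧ [σ] ∧ [σ''], w), where (φ₁ ⋈ φ₂)(σ,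 τ, σ'') ⟺ φ₁(σ, τ) ∧ φ₂(τ, σ''). (The key identity underlying correctness of the compilation of sequential composition: summing the product of weighted model counts over all intermediate states equals the weighted model count of the conjoined relabeled formulas.) -/
open Classical in
lemma wmc_pair {U : Type} [Fintype U] (φ : (U ⊕ U → Bool) → Prop) (w : U ⊕ U → Bool → ℝ)
    (σ τ : U → Bool) :
    WMC (fun ω => φ ω ∧ (fun u => ω (Sum.inl u)) = σ ∧ (fun u => ω (Sum.inr u)) = τ) w
      = if φ (Sum.elim σ τ) then
          (∏ u, w (Sum.inl u) (σ u)) * ∏ u, w (Sum.inr u) (τ u) else 0 := by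
  classical
  unfold WMC
  rw [Finset.sum_eq_single (Sum.elim σ τ)]
  · have h1 : (fun u => Sum.elim σ τ (Sum.inl u)) = σ := rfl
    have h2 : (fun u => Sum.elim σ τ (Sum.inr u)) = τ := rfl
    simp [h1, h2, Fintype.prod_sum_type]
  · intro b _ hb
    rw [if_neg]
    rintro ⟨_, h1, h2⟩
    exact hb (funext fun x => by cases x with
      | inl u => exact congrFun h1 u
      | inr u => exact congrFun h2 u)
  · intro h; simp at h

def tripleEquiv (U : Type) : (U ⊕ U ⊕ U → Bool) ≃ ((U → Bool) × (U → Bool) × (U → Bool)) where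
  toFun ω := (fun a => ω (Sum.inl a),
      fun s => ω (Sum.inr (Sum.inl s)), fun s => ω (Sum.inr (Sum.inr s)))
  invFun p := Sum.elim p.1 (Sum.elim p.2.1 p.2.2)
  left_inv ω := funext fun x => by rcases x with a | s | s <;> rfl
  right_inv p := rfl

open Classical in
lemma wmc_triple {U : Type} [Fintype U] (Φ : (U ⊕ U ⊕ U → Bool) → Prop)
    (w : U ⊕ U ⊕ U → Bool → ℝ) (σ σ'' : U → Bool) :
    WMC (fun ω => Φ ω ∧ (fun u => ω (Sum.inl u)) = σ
          ∧ (fun u => ω (Sum.inr (Sum.inr u))) = σ'') w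
      = ∑ τ : U → Bool,
          if Φ (Sum.elim σ (Sum.elim τ σ'')) then
            ∏ v, w v (Sum.elim σ (Sum.elim τ σ'') v) else 0 := by
  classical
  unfold WMC
  set e := tripleEquiv U with he
  refine Eq.trans (Finset.sum_equiv e (t := Finset.univ) (fun i => by simp) (fun ω _ => ?_)
      (g := fun p : ((U → Bool) × (U → Bool) × (U → Bool)) =>
        if Φ (Sum.elim p.1 (Sum.elim p.2.1 p.2.2))
            ∧ (fun u => Sum.elim p.1 (Sum.elim p.2.1 p.2.2) (Sum.inl u)) = σ
            ∧ (fun u => Sum.elim p.1 (Sum.elim p.2.1 p.2.2) (Sum.inr (Sum.inr u))) = σ''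
          then ∏ v, w v (Sum.elim p.1 (Sum.elim p.2.1 p.2.2) v) else 0)) ?_
  · beta_reduce
    rw [show Sum.elim (e ω).1 (Sum.elim (e ω).2.1 (e ω).2.2) = ω from
      funext fun x => by rcases x with a | s | s <;> rfl]
    by_cases h : Φ ω ∧ (fun u => ω (Sum.inl u)) = σ ∧ (fun u => ω (Sum.inr (Sum.inr u))) = σ''
    · rw [if_pos h, if_pos h]
    · rw [if_neg h, if_neg h]
  · rw [Fintype.sum_prod_type]
    rw [Finset.sum_eq_single σ]
    · rw [Fintype.sum_prod_type]
      apply Finset.sum_congr rfl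
      intro b _
      rw [Finset.sum_eq_single σ'']
      · have h1 : (fun u => Sum.elim σ (Sum.elim b σ'') (Sum.inl u)) = σ := rfl
        have h2 : (fun u => Sum.elim σ (Sum.elim b σ'') (Sum.inr (Sum.inr u))) = σ'' := rfl
        simp [h1, h2]
      · intro c _ hc
        rw [if_neg]
        rintro ⟨_, _, h2⟩
        exact hc (funext fun u => (congrFun h2 u))
      · intro h; simp at h
    · intro a _ ha
      apply Finset.sum_eq_zero
      intro p _
      rw [if_neg]
      rintro ⟨_, h1, _⟩
      exact ha (funext fun u => congrFun h1 u)
    · intro h; simp at h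

/-- The key identity underlying correctness of the compilation of sequential
composition: summing the product of weighted model counts over all intermediate
states equals the weighted model count of the conjoined relabeled formulas. -/
theorem wmc_seq_correct {U : Type} [Fintype U] [DecidableEq U]
    (φ₁ φ₂ : (U ⊕ U → Bool) → Prop)
    (w : U ⊕ U ⊕ U → Bool → ℝ) (hw : ∀ v b, 0 ≤ w v b)
    (hmid : ∀ (u : U) (b : Bool), w (Sum.inr (Sum.inl u)) b = 1)
    (σ σ'' : U → Bool) :
    -- restrictions of the weight function to the first two and last two copies
    let w₁₂ : U ⊕ U → Bool → ℝ :=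
      fun v => Sum.elim (fun a => w (Sum.inl a)) (fun s => w (Sum.inr (Sum.inl s))) v
    let w₂₃ : U ⊕ U → Bool → ℝ :=
      fun v => Sum.elim (fun s => w (Sum.inr (Sum.inl s)))
        (fun s => w (Sum.inr (Sum.inr s))) v
    ∑ τ : U → Bool,
        WMC (fun ω => φ₁ ω ∧ (fun u => ω (Sum.inl u)) = σ
              ∧ (fun u => ω (Sum.inr u)) = τ) w₁₂
          * WMC (fun ω => φ₂ ω ∧ (fun u => ω (Sum.inl u)) = τ
              ∧ (fun u => ω (Sum.inr u)) = σ'') w₂₃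
      = WMC (fun ω : U ⊕ U ⊕ U → Bool =>
            (φ₁ (Sum.elim (fun a => ω (Sum.inl a)) (fun s => ω (Sum.inr (Sum.inl s))))
              ∧ φ₂ (Sum.elim (fun s => ω (Sum.inr (Sum.inl s)))
                  (fun s => ω (Sum.inr (Sum.inr s)))))
            ∧ (fun u => ω (Sum.inl u)) = σ
            ∧ (fun u => ω (Sum.inr (Sum.inr u))) = σ'') w := by
  intro w₁₂ w₂₃
  rw [wmc_triple]
  refine Finset.sum_congr (by congr 1 <;> exact Subsingleton.elim _ _) fun τ _ => ?_
  rw [wmc_pair, wmc_pair]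
  have hh1 : (Sum.elim (fun a => Sum.elim σ (Sum.elim τ σ'') (Sum.inl a))
      (fun s => Sum.elim σ (Sum.elim τ σ'') (Sum.inr (Sum.inl s)))) = Sum.elim σ τ := rfl
  have hh2 : (Sum.elim (fun s => Sum.elim σ (Sum.elim τ σ'') (Sum.inr (Sum.inl s)))
      (fun s => Sum.elim σ (Sum.elim τ σ'') (Sum.inr (Sum.inr s)))) = Sum.elim τ σ'' := rfl
  by_cases h1 : φ₁ (Sum.elim σ τ) <;> by_cases h2 : φ₂ (Sum.elim τ σ'') <;>
    simp [w₁₂, w₂₃, hh1, hh2, h1, h2, Fintype.prod_sum_type, hmid, mul_assoc]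
end
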